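/- (KL divergence between two spiked Gaussian class-conditional models.) For $i\in\{1,2\}$ let $B^{(i)} \in \mathbb{R}^{p\times K}$ have orthonormal columns, $\lambda>0$, $\alpha\in\mathbb{R}^K$, and set $\mu^{(i)} = \sqrt\lambda B^{(i)}\alpha$ and $\Sigma^{(i)} = \lambda B^{(i)}(B^{(i)})^\top + I_p$. Then: (a) $|\Sigma^{(i)}| = (\lambda+1)^K$ and $(\Sigma^{(i)})^{-1} = I_p - \frac{\lambda}{\lambda+1}B^{(i)}(B^{(i)})^\top$; (b) $(\Sigma^{(i)})^{-1}\mu^{(i)} = \frac{\sqrt\lambda}{1+\lambda}B^{(i)}\alpha$ and $(\mu^{(i)})^\top(\Sigma^{(i)})^{-1}\mu^{(i)} = \frac{\lambda}{1+\lambda}\|\alpha\|_2^2$; (c) $\mathrm{KL}\big(N_p(\mu^{(1)},\Sigma^{(1)}),\,N_p(\mu^{(2)},\Sigma^{(2)})\big) \le \frac{\lambda^2}{2(1+\lambda)}\|B^{(1)}(B^{(1)})^\top - B^{(2)}(B^{(2)})^\top\|_F^2 + \frac{\lambda}{2}\|\alpha\|_2^2\,\|\tilde b\|_2^2$ where $\tilde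 b$ denotes the difference of the relevant first columns, in particular if $B^{(1)},B^{(2)}$ differ only in the first column $B_1^{(i)} = (\sqrt{1-\varepsilon^2}, 0_{K-1}^\top, \varepsilon (J^{(i)})^\top)^\top$ with unit vectors $J^{(i)}$ and $\alpha = (\Delta/2, 0_{K-1}^\top)^\top$, then $\mathrm{KL} \le \big(\frac{2\lambda}{1+\lambda} + \frac{\Delta^2}{2}\big)\lambda\varepsilon^2$. -/

import Mathlib

open Matrix

/-- Closed-form Kullback–Leibler divergence between the multivariate Gaussians
`N(μ1, Σ1)` and `N(μ2, Σ2)`. -/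
noncomputable def klGaussian {p : ℕ} (μ1 : Fin p → ℝ) (S1 : Matrix (Fin p) (Fin p) ℝ)
    (μ2 : Fin p → ℝ) (S2 : Matrix (Fin p) (Fin p) ℝ) : ℝ :=
  (1 / 2) * (Matrix.trace (S2⁻¹ * (S1 - S2)) + Real.log (S2.det / S1.det)
    + (μ2 - μ1) ⬝ᵥ S2⁻¹.mulVec (μ2 - μ1))

/-!
With `P = B Bᵀ` the orthogonal projection onto the column space of `B`, the covariance
`Σ = λ P + I` has eigenvalue `λ + 1` on that `K`-dimensional space and `1` on its complement,
which gives its determinant and its inverse `I - λ/(λ+1) P`.  As both covariances have the same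
determinant, the log term of the KL divergence vanishes; since `tr P₁ = tr P₂ = K`, the trace
term equals `λ²/(2(λ+1)) ‖P₁ - P₂‖_F²`, and the Mahalanobis term is at most `‖μ₂ - μ₁‖²`
because `Σ₂⁻¹ ≤ I`.  When the loadings differ only in their first columns `b₁, b₂`, which are unit
vectors, `‖P₁ - P₂‖_F² = 2 - 2⟨b₁, b₂⟩² ≤ 2‖b₁ - b₂‖²`, and `b₁ - b₂ = ε (u₁ - u₂)` has squared
norm at most `4ε²`.
-/

namespace Matrix

section Idempotent

variable {m : Type*} [Fintype m] [DecidableEq m] {𝕜 : Type*} [Field 𝕜]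

theorem inv_smul_add_one_of_isIdempotentElem {P : Matrix m m 𝕜} (hP : IsIdempotentElem P)
    {lam : 𝕜} (hlam : lam + 1 ≠ 0) : (lam • P + 1)⁻¹ = 1 - (lam / (lam + 1)) • P := by
  refine inv_eq_right_inv ?_
  have hc : lam - lam / (lam + 1) * lam - lam / (lam + 1) = 0 := by field_simp; ring
  calc (lam • P + 1) * (1 - (lam / (lam + 1)) • P)
      = (lam - lam / (lam + 1) * lam - lam / (lam + 1)) • P + 1 := by
        simp only [add_mul, mul_sub, smul_mul_smul, hP.eq, mul_one, one_mul]
        module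
    _ = 1 := by rw [hc, zero_smul, zero_add]

theorem trace_inv_smul_add_one_mul_sub [CharZero 𝕜] {P Q : Matrix m m 𝕜}
    (hP : IsIdempotentElem P) (hQ : IsIdempotentElem Q) (htr : P.trace = Q.trace) {lam : 𝕜}
    (hlam : lam + 1 ≠ 0) :
    ((lam • Q + 1)⁻¹ * ((lam • P + 1) - (lam • Q + 1))).trace
      = lam ^ 2 / (2 * (lam + 1)) * ((P - Q) * (P - Q)).trace := by
  have hsq : ((P - Q) * (P - Q)).trace = 2 * (P.trace - (Q * P).trace) := by
    simp only [sub_mul, mul_sub, hP.eq, hQ.eq, trace_sub, trace_mul_comm P Q, htr]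
    ring
  rw [inv_smul_add_one_of_isIdempotentElem hQ hlam, add_sub_add_right_eq_sub, ← smul_sub, hsq]
  simp only [sub_mul, one_mul, Matrix.mul_smul, Matrix.smul_mul, mul_sub, hQ.eq, trace_sub,
    trace_smul, smul_eq_mul, htr]
  field_simp
  ring

end Idempotent

section Orthonormal

variable {m n : Type*} [Fintype m] [DecidableEq n] {R : Type*} [CommRing R] {B : Matrix m n R}

theorem col_dotProduct_col_self_of_transpose_mul_self (hB : Bᵀ * B = 1) (j : n) :
    B.col j ⬝ᵥ B.col j = 1 := by
  simpa [mul_apply, dotProduct] using congrFun (congrFun hB j) j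

variable [Fintype n]

theorem mul_transpose_mul_of_transpose_mul_self (hB : Bᵀ * B = 1) : B * Bᵀ * B = B := by
  rw [Matrix.mul_assoc, hB, Matrix.mul_one]

theorem isIdempotentElem_mul_transpose (hB : Bᵀ * B = 1) : IsIdempotentElem (B * Bᵀ) := by
  rw [IsIdempotentElem, ← Matrix.mul_assoc, mul_transpose_mul_of_transpose_mul_self hB]

theorem trace_mul_transpose_of_transpose_mul_self (hB : Bᵀ * B = 1) :
    (B * Bᵀ).trace = Fintype.card n := by
  rw [trace_mul_comm, hB, trace_one]

theorem det_smul_mul_transpose_add_one [DecidableEq m] (hB : Bᵀ * B = 1) (lam : R) :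
    (lam • (B * Bᵀ) + 1).det = (lam + 1) ^ Fintype.card n := by
  rw [← Matrix.smul_mul, det_mul_add_one_comm, Matrix.mul_smul, hB,
    show lam • (1 : Matrix n n R) + 1 = (lam + 1) • 1 by rw [add_smul, one_smul],
    det_smul, det_one, mul_one]

theorem mulVec_dotProduct_mulVec_of_transpose_mul_self (hB : Bᵀ * B = 1) (x y : n → R) :
    B *ᵥ x ⬝ᵥ B *ᵥ y = x ⬝ᵥ y := by
  rw [dotProduct_mulVec, ← mulVec_transpose, mulVec_mulVec, hB, one_mulVec]

end Orthonormal

theorem dotProduct_self_nonneg {n R : Type*} [Fintype n] [CommRing R] [LinearOrder R]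
    [IsStrictOrderedRing R] (v : n → R) : 0 ≤ v ⬝ᵥ v :=
  Finset.sum_nonneg fun i _ => mul_self_nonneg (v i)

section Field

variable {m n : Type*} [Fintype m] [Fintype n] [DecidableEq m] [DecidableEq n]
  {𝕜 : Type*} [Field 𝕜] {B : Matrix m n 𝕜} {lam : 𝕜}

theorem inv_smul_mul_transpose_add_one_mulVec (hB : Bᵀ * B = 1) (hlam : lam + 1 ≠ 0)
    (a : 𝕜) (x : n → 𝕜) :
    (lam • (B * Bᵀ) + 1)⁻¹ *ᵥ (a • B *ᵥ x) = (a / (1 + lam)) • B *ᵥ x := by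
  rw [inv_smul_add_one_of_isIdempotentElem (isIdempotentElem_mul_transpose hB) hlam,
    sub_mulVec, one_mulVec, smul_mulVec, mulVec_smul, mulVec_mulVec,
    mul_transpose_mul_of_transpose_mul_self hB, smul_smul, ← sub_smul]
  have : 1 + lam ≠ 0 := by rwa [add_comm]
  congr 1
  field_simp
  ring

theorem dotProduct_inv_smul_mul_transpose_add_one_mulVec (hB : Bᵀ * B = 1)
    (hlam : lam + 1 ≠ 0) (a : 𝕜) (x : n → 𝕜) :
    (a • B *ᵥ x) ⬝ᵥ (lam • (B * Bᵀ) + 1)⁻¹ *ᵥ (a • B *ᵥ x)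
      = a ^ 2 / (1 + lam) * (x ⬝ᵥ x) := by
  rw [inv_smul_mul_transpose_add_one_mulVec hB hlam, smul_dotProduct, dotProduct_smul,
    mulVec_dotProduct_mulVec_of_transpose_mul_self hB, smul_eq_mul, smul_eq_mul]
  ring

variable [LinearOrder 𝕜] [IsStrictOrderedRing 𝕜]

theorem dotProduct_inv_smul_mul_transpose_add_one_mulVec_le (hB : Bᵀ * B = 1) (hlam : 0 ≤ lam)
    (v : m → 𝕜) : v ⬝ᵥ (lam • (B * Bᵀ) + 1)⁻¹ *ᵥ v ≤ v ⬝ᵥ v := by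
  have hproj : v ⬝ᵥ (B * Bᵀ) *ᵥ v = Bᵀ *ᵥ v ⬝ᵥ Bᵀ *ᵥ v := by
    rw [← mulVec_mulVec, dotProduct_mulVec, ← mulVec_transpose]
  rw [inv_smul_add_one_of_isIdempotentElem (isIdempotentElem_mul_transpose hB) (by positivity),
    sub_mulVec, one_mulVec, smul_mulVec, dotProduct_sub, dotProduct_smul, hproj, smul_eq_mul,
    sub_le_self_iff]
  exact mul_nonneg (by positivity) (dotProduct_self_nonneg _)

end Field

theorem trace_mul_transpose_eq_sum_sq {m n R : Type*} [Fintype m] [Fintype n] [CommRing R]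
    (A : Matrix m n R) : (A * Aᵀ).trace = ∑ i, ∑ j, A i j ^ 2 := by
  simp only [trace, diag, mul_apply, transpose_apply, sq]

section UnitVectors

variable {m : Type*} [Fintype m] {R : Type*} [CommRing R]

theorem sum_sq_vecMulVec_sub_vecMulVec (x y : m → R) :
    ∑ i, ∑ j, (vecMulVec x x - vecMulVec y y) i j ^ 2
      = (x ⬝ᵥ x) ^ 2 - 2 * (x ⬝ᵥ y) ^ 2 + (y ⬝ᵥ y) ^ 2 := by
  simp only [dotProduct, sq, Finset.sum_mul_sum]
  simp only [Finset.mul_sum, ← Finset.sum_sub_distrib, ← Finset.sum_add_distrib]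
  exact Finset.sum_congr rfl fun i _ => Finset.sum_congr rfl fun j _ => by
    simp only [sub_apply, vecMulVec_apply]; ring

theorem sub_dotProduct_sub_self (x y : m → R) :
    (x - y) ⬝ᵥ (x - y) = x ⬝ᵥ x - 2 * (x ⬝ᵥ y) + y ⬝ᵥ y := by
  simp only [sub_dotProduct, dotProduct_sub, dotProduct_comm y x]
  ring

variable [LinearOrder R] [IsStrictOrderedRing R] {x y : m → R}

theorem sum_sq_vecMulVec_sub_vecMulVec_le (hx : x ⬝ᵥ x = 1) (hy : y ⬝ᵥ y = 1) :
    ∑ i, ∑ j, (vecMulVec x x - vecMulVec y y) i j ^ 2 ≤ 2 * ((x - y) ⬝ᵥ (x - y)) := by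
  rw [sum_sq_vecMulVec_sub_vecMulVec, sub_dotProduct_sub_self, hx, hy]
  nlinarith [sq_nonneg (1 - x ⬝ᵥ y)]

theorem sub_dotProduct_sub_le_four (hx : x ⬝ᵥ x = 1) (hy : y ⬝ᵥ y = 1) :
    (x - y) ⬝ᵥ (x - y) ≤ 4 := by
  have hsum := dotProduct_self_nonneg (x + y)
  rw [add_dotProduct, dotProduct_add, dotProduct_add, dotProduct_comm y x, hx, hy] at hsum
  rw [sub_dotProduct_sub_self, hx, hy]
  linarith

theorem sum_sq_sub_le_four_mul_sq {e u v : m → R} {a ε : R}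
    (hx : ∀ i, x i = a * e i + ε * u i) (hy : ∀ i, y i = a * e i + ε * v i)
    (hu : u ⬝ᵥ u = 1) (hv : v ⬝ᵥ v = 1) : ∑ i, (x i - y i) ^ 2 ≤ 4 * ε ^ 2 := by
  have hxy : ∑ i, (x i - y i) ^ 2 = ε ^ 2 * ((u - v) ⬝ᵥ (u - v)) := by
    simp only [dotProduct, Finset.mul_sum, hx, hy, Pi.sub_apply]
    exact Finset.sum_congr rfl fun i _ => by ring
  rw [hxy]
  nlinarith [sub_dotProduct_sub_le_four hu hv, sq_nonneg ε]

end UnitVectors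

theorem mul_transpose_sub_mul_transpose_of_col_eq {m n R : Type*} [Fintype n] [CommRing R]
    {B1 B2 : Matrix m n R} {j₀ : n} (hcol : ∀ j, j ≠ j₀ → ∀ i, B1 i j = B2 i j) :
    B1 * B1ᵀ - B2 * B2ᵀ
      = vecMulVec (B1.col j₀) (B1.col j₀) - vecMulVec (B2.col j₀) (B2.col j₀) := by
  ext i k
  simp only [sub_apply, mul_apply, transpose_apply, vecMulVec_apply, col_apply,
    ← Finset.sum_sub_distrib]
  refine Finset.sum_eq_single j₀ (fun j _ hj => ?_) (by simp)
  rw [hcol j hj, hcol j hj, sub_self]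

section Columns

variable {m n R : Type*} [Fintype m] [Fintype n] [DecidableEq n] [CommRing R]
  {B1 B2 : Matrix m n R} {j₀ : n}

theorem sum_sq_mul_transpose_sub_mul_transpose_le [LinearOrder R] [IsStrictOrderedRing R]
    (hB1 : B1ᵀ * B1 = 1) (hB2 : B2ᵀ * B2 = 1)
    (hcol : ∀ j, j ≠ j₀ → ∀ i, B1 i j = B2 i j) :
    ∑ i, ∑ k, (B1 * B1ᵀ - B2 * B2ᵀ) i k ^ 2 ≤ 2 * ∑ i, (B1 i j₀ - B2 i j₀) ^ 2 := by
  rw [mul_transpose_sub_mul_transpose_of_col_eq hcol]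
  convert sum_sq_vecMulVec_sub_vecMulVec_le (col_dotProduct_col_self_of_transpose_mul_self hB1 j₀)
    (col_dotProduct_col_self_of_transpose_mul_self hB2 j₀) using 2
  simp only [dotProduct, Pi.sub_apply, col_apply, sq]

theorem smul_mulVec_single_sub_dotProduct (c a : R) :
    (c • B2 *ᵥ Pi.single j₀ a - c • B1 *ᵥ Pi.single j₀ a)
      ⬝ᵥ (c • B2 *ᵥ Pi.single j₀ a - c • B1 *ᵥ Pi.single j₀ a)
      = c ^ 2 * a ^ 2 * ∑ i, (B1 i j₀ - B2 i j₀) ^ 2 := by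
  simp only [dotProduct, Finset.mul_sum]
  exact Finset.sum_congr rfl fun i _ => by
    simp only [mulVec_single, op_smul_eq_smul, Pi.sub_apply, Pi.smul_apply, col_apply,
      smul_eq_mul]
    ring

end Columns

end Matrix

theorem klGaussian_spiked_le {p K : ℕ} {B1 B2 : Matrix (Fin p) (Fin K) ℝ}
    (hB1 : B1ᵀ * B1 = 1) (hB2 : B2ᵀ * B2 = 1) {lam : ℝ} (hlam : 0 ≤ lam)
    (μ1 μ2 : Fin p → ℝ) :
    klGaussian μ1 (lam • (B1 * B1ᵀ) + 1) μ2 (lam • (B2 * B2ᵀ) + 1)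
      ≤ 1 / 2 * (lam ^ 2 / (2 * (lam + 1)) * ∑ i, ∑ j, ((B1 * B1ᵀ - B2 * B2ᵀ) i j) ^ 2
        + (μ2 - μ1) ⬝ᵥ (μ2 - μ1)) := by
  have hl : lam + 1 ≠ 0 := by positivity
  have htrace := trace_inv_smul_add_one_mul_sub (isIdempotentElem_mul_transpose hB1)
    (isIdempotentElem_mul_transpose hB2) (by rw [trace_mul_transpose_of_transpose_mul_self hB1,
      trace_mul_transpose_of_transpose_mul_self hB2]) hl
  have hfrob : ((B1 * B1ᵀ - B2 * B2ᵀ) * (B1 * B1ᵀ - B2 * B2ᵀ)).trace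
      = ∑ i, ∑ j, ((B1 * B1ᵀ - B2 * B2ᵀ) i j) ^ 2 := by
    rw [← trace_mul_transpose_eq_sum_sq, transpose_sub, transpose_mul, transpose_mul,
      transpose_transpose, transpose_transpose]
  have hlog : Real.log ((lam • (B2 * B2ᵀ) + 1).det / (lam • (B1 * B1ᵀ) + 1).det) = 0 := by
    rw [det_smul_mul_transpose_add_one hB1, det_smul_mul_transpose_add_one hB2,
      div_self (pow_ne_zero _ hl), Real.log_one]
  unfold klGaussian
  rw [htrace, hfrob, hlog, add_zero]
  gcongr
  exact dotProduct_inv_smul_mul_transpose_add_one_mulVec_le hB2 hlam _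

theorem klGaussian_spiked_single_le {p K : ℕ} {B1 B2 : Matrix (Fin p) (Fin K) ℝ}
    (hB1 : B1ᵀ * B1 = 1) (hB2 : B2ᵀ * B2 = 1) {lam : ℝ} (hlam : 0 ≤ lam)
    (j₀ : Fin K) (a : ℝ) :
    klGaussian (Real.sqrt lam • B1 *ᵥ Pi.single j₀ a) (lam • (B1 * B1ᵀ) + 1)
        (Real.sqrt lam • B2 *ᵥ Pi.single j₀ a) (lam • (B2 * B2ᵀ) + 1)
      ≤ 1 / 2 * (lam ^ 2 / (2 * (lam + 1)) * ∑ i, ∑ j, ((B1 * B1ᵀ - B2 * B2ᵀ) i j) ^ 2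
        + lam * a ^ 2 * ∑ i, (B1 i j₀ - B2 i j₀) ^ 2) := by
  have h := klGaussian_spiked_le hB1 hB2 hlam (Real.sqrt lam • B1 *ᵥ Pi.single j₀ a)
    (Real.sqrt lam • B2 *ᵥ Pi.single j₀ a)
  rwa [smul_mulVec_single_sub_dotProduct, Real.sq_sqrt hlam] at h

theorem stmt19_general {p K : ℕ} [NeZero K] (lam : ℝ) (hlam : 0 < lam)
    (B1 B2 : Matrix (Fin p) (Fin K) ℝ)
    (hB1 : B1ᵀ * B1 = 1) (hB2 : B2ᵀ * B2 = 1)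
    (Δ ε : ℝ)
    (α : Fin K → ℝ) (hα : α = fun j => if j = 0 then Δ / 2 else 0)
    (e u1 u2 : Fin p → ℝ)
    (hu1 : u1 ⬝ᵥ u1 = 1) (hu2 : u2 ⬝ᵥ u2 = 1)
    (hcol1 : ∀ i, B1 i 0 = Real.sqrt (1 - ε ^ 2) * e i + ε * u1 i)
    (hcol2 : ∀ i, B2 i 0 = Real.sqrt (1 - ε ^ 2) * e i + ε * u2 i)
    (hcols : ∀ j : Fin K, j ≠ 0 → ∀ i, B1 i j = B2 i j)
    (mu1 mu2 : Fin p → ℝ) (S1 S2 : Matrix (Fin p) (Fin p) ℝ)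
    (hmu1 : mu1 = Real.sqrt lam • B1.mulVec α)
    (hmu2 : mu2 = Real.sqrt lam • B2.mulVec α)
    (hS1 : S1 = lam • (B1 * B1ᵀ) + 1)
    (hS2 : S2 = lam • (B2 * B2ᵀ) + 1) :
    -- (a) determinant and inverse
    (S1.det = (lam + 1) ^ K ∧ S1⁻¹ = 1 - (lam / (lam + 1)) • (B1 * B1ᵀ))
    ∧ (S2.det = (lam + 1) ^ K ∧ S2⁻¹ = 1 - (lam / (lam + 1)) • (B2 * B2ᵀ))
    -- (b) mean formulas
    ∧ (S1⁻¹.mulVec mu1 = (Real.sqrt lam / (1 + lam)) • B1.mulVec α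
        ∧ mu1 ⬝ᵥ S1⁻¹.mulVec mu1 = lam / (1 + lam) * (α ⬝ᵥ α))
    ∧ (S2⁻¹.mulVec mu2 = (Real.sqrt lam / (1 + lam)) • B2.mulVec α
        ∧ mu2 ⬝ᵥ S2⁻¹.mulVec mu2 = lam / (1 + lam) * (α ⬝ᵥ α))
    -- (c) KL divergence bounds
    ∧ klGaussian mu1 S1 mu2 S2
        ≤ lam ^ 2 / (2 * (1 + lam)) * (∑ i, ∑ j, ((B1 * B1ᵀ - B2 * B2ᵀ) i j) ^ 2)
          + lam / 2 * (α ⬝ᵥ α) * (∑ i, (B1 i 0 - B2 i 0) ^ 2)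
    ∧ klGaussian mu1 S1 mu2 S2 ≤ (2 * lam / (1 + lam) + Δ ^ 2 / 2) * lam * ε ^ 2 := by
  subst hS1 hS2 hmu1 hmu2
  have hl : lam + 1 ≠ 0 := by positivity
  have hsqrt : Real.sqrt lam ^ 2 = lam := Real.sq_sqrt hlam.le
  have hα' : α = Pi.single 0 (Δ / 2) := by
    rw [hα]; funext j; rw [Pi.single_apply]
  have hαα : α ⬝ᵥ α = (Δ / 2) ^ 2 := by
    rw [hα', dotProduct_single, Pi.single_eq_same, sq]
  have hKL := klGaussian_spiked_single_le hB1 hB2 hlam.le 0 (Δ / 2)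
  rw [← hα'] at hKL
  have hF := sum_sq_mul_transpose_sub_mul_transpose_le hB1 hB2 hcols
  have hD := sum_sq_sub_le_four_mul_sq hcol1 hcol2 hu1 hu2
  refine ⟨⟨by rw [det_smul_mul_transpose_add_one hB1, Fintype.card_fin],
      inv_smul_add_one_of_isIdempotentElem (isIdempotentElem_mul_transpose hB1) hl⟩,
    ⟨by rw [det_smul_mul_transpose_add_one hB2, Fintype.card_fin],
      inv_smul_add_one_of_isIdempotentElem (isIdempotentElem_mul_transpose hB2) hl⟩,
    ⟨inv_smul_mul_transpose_add_one_mulVec hB1 hl _ _,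
      by rw [dotProduct_inv_smul_mul_transpose_add_one_mulVec hB1 hl, hsqrt]⟩,
    ⟨inv_smul_mul_transpose_add_one_mulVec hB2 hl _ _,
      by rw [dotProduct_inv_smul_mul_transpose_add_one_mulVec hB2 hl, hsqrt]⟩, ?_, ?_⟩
  · rw [hαα, add_comm 1 lam]
    have : 0 ≤ lam ^ 2 / (2 * (lam + 1)) * ∑ i, ∑ j, ((B1 * B1ᵀ - B2 * B2ᵀ) i j) ^ 2 := by
      positivity
    linarith
  · calc _ ≤ _ := hKL
      _ ≤ 1 / 2 * (lam ^ 2 / (2 * (lam + 1)) * (8 * ε ^ 2)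
          + lam * (Δ / 2) ^ 2 * (4 * ε ^ 2)) := by
        gcongr; linarith
      _ = (2 * lam / (1 + lam) + Δ ^ 2 / 2) * lam * ε ^ 2 := by
        field_simp; ring

/-- Spiked Gaussian class-conditional models `μ⁽ⁱ⁾ = √λ B⁽ⁱ⁾ α`,
`Σ⁽ⁱ⁾ = λ B⁽ⁱ⁾(B⁽ⁱ⁾)ᵀ + I`: (a) determinant and inverse formulas; (b) formulas for
`(Σ⁽ⁱ⁾)⁻¹μ⁽ⁱ⁾` and the induced quadratic form; (c) KL divergence bounds when the two
loading matrices differ only in the first column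
`B₁⁽ⁱ⁾ = √(1-ε²) e + ε u⁽ⁱ⁾` and `α = (Δ/2, 0, …, 0)ᵀ`, in particular
`KL ≤ (2λ/(1+λ) + Δ²/2) λ ε²`. -/
theorem stmt19 {p K : ℕ} [NeZero K] (lam : ℝ) (hlam : 0 < lam)
    (B1 B2 : Matrix (Fin p) (Fin K) ℝ)
    (hB1 : B1ᵀ * B1 = 1) (hB2 : B2ᵀ * B2 = 1)
    (Δ ε : ℝ) (hε0 : 0 ≤ ε) (hε1 : ε ≤ 1)
    (α : Fin K → ℝ) (hα : α = fun j => if j = 0 then Δ / 2 else 0)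
    (e u1 u2 : Fin p → ℝ)
    (he : e ⬝ᵥ e = 1) (hu1 : u1 ⬝ᵥ u1 = 1) (hu2 : u2 ⬝ᵥ u2 = 1)
    (heu1 : e ⬝ᵥ u1 = 0) (heu2 : e ⬝ᵥ u2 = 0)
    (hcol1 : ∀ i, B1 i 0 = Real.sqrt (1 - ε ^ 2) * e i + ε * u1 i)
    (hcol2 : ∀ i, B2 i 0 = Real.sqrt (1 - ε ^ 2) * e i + ε * u2 i)
    (hcols : ∀ j : Fin K, j ≠ 0 → ∀ i, B1 i j = B2 i j)
    (mu1 mu2 : Fin p → ℝ) (S1 S2 : Matrix (Fin p) (Fin p) ℝ)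
    (hmu1 : mu1 = Real.sqrt lam • B1.mulVec α)
    (hmu2 : mu2 = Real.sqrt lam • B2.mulVec α)
    (hS1 : S1 = lam • (B1 * B1ᵀ) + 1)
    (hS2 : S2 = lam • (B2 * B2ᵀ) + 1) :
    -- (a) determinant and inverse
    (S1.det = (lam + 1) ^ K ∧ S1⁻¹ = 1 - (lam / (lam + 1)) • (B1 * B1ᵀ))
    ∧ (S2.det = (lam + 1) ^ K ∧ S2⁻¹ = 1 - (lam / (lam + 1)) • (B2 * B2ᵀ))
    -- (b) mean formulas
    ∧ (S1⁻¹.mulVec mu1 = (Real.sqrt lam / (1 + lam)) • B1.mulVec α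
        ∧ mu1 ⬝ᵥ S1⁻¹.mulVec mu1 = lam / (1 + lam) * (α ⬝ᵥ α))
    ∧ (S2⁻¹.mulVec mu2 = (Real.sqrt lam / (1 + lam)) • B2.mulVec α
        ∧ mu2 ⬝ᵥ S2⁻¹.mulVec mu2 = lam / (1 + lam) * (α ⬝ᵥ α))
    -- (c) KL divergence bounds
    ∧ klGaussian mu1 S1 mu2 S2
        ≤ lam ^ 2 / (2 * (1 + lam)) * (∑ i, ∑ j, ((B1 * B1ᵀ - B2 * B2ᵀ) i j) ^ 2)
          + lam / 2 * (α ⬝ᵥ α) * (∑ i, (B1 i 0 - B2 i 0) ^ 2)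
    ∧ klGaussian mu1 S1 mu2 S2 ≤ (2 * lam / (1 + lam) + Δ ^ 2 / 2) * lam * ε ^ 2 :=
  stmt19_general lam hlam B1 B2 hB1 hB2 Δ ε α hα e u1 u2 hu1 hu2 hcol1 hcol2 hcols mu1 mu2 S1 S2
    hmu1 hmu2 hS1 hS2
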